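/- Assume P = Q = 0. Let ε = e^{2πi/3}, E = diag(1, ε², ε, 1), and J₁ the antidiagonal matrix with entries (1, 1, 1, 1). Then for every λ ∈ ℂ with λ ≠ 0, the complex matrices U^λ, V^λ of the loop-parameter family satisfy −J₁ (E U^λ E⁻¹)ᵗ J₁ = U^{−ελ} and −J₁ (E V^λ E⁻¹)ᵗ J₁ = V^{−ελ}; that is, the extended Wilczynski frame of a Demoulin surface satisfies the order-six symmetry κ F(λ) = F(−ελ), where κ = τ₁ ∘ σ with τ₁(X) = −J₁ Xᵗ J₁ and σ = Ad(E) (so F takes values in the twisted loop group Λ SL₄ℝ_κ). -/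

import Mathlib

open Matrix

noncomputable section

/-- The primitive cube root of unity `ε = e^{2πi/3}`. -/
def ε : ℂ := Complex.exp (2 * Real.pi * Complex.I / 3)

/-- `E = diag(1, ε², ε, 1)`. -/
def Emat : Matrix (Fin 4) (Fin 4) ℂ := Matrix.diagonal ![1, ε ^ 2, ε, 1]

/-- The antidiagonal matrix `J₁ = offdiag(1,1,1,1)`. -/
def J₁ : Matrix (Fin 4) (Fin 4) ℂ := !![0,0,0,1; 0,0,1,0; 0,1,0,0; 1,0,0,0]

/-- `U^λ` of the loop-parameter family with `P = Q = 0` (pointwise data, `u = c_x/(2c)`). -/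
def Uloop (b k u : ℝ) (lam : ℂ) : Matrix (Fin 4) (Fin 4) ℂ :=
  !![(u : ℂ), 0, lam⁻¹ * (k : ℂ), 0;
     lam⁻¹, -(u : ℂ), 0, lam⁻¹ * (k : ℂ);
     0, lam⁻¹ * (b : ℂ), (u : ℂ), 0;
     0, 0, lam⁻¹, -(u : ℂ)]

/-- `V^λ` of the loop-parameter family with `P = Q = 0` (pointwise data, `v = b_y/(2b)`). -/
def Vloop (c ℓ v : ℝ) (lam : ℂ) : Matrix (Fin 4) (Fin 4) ℂ :=
  !![(v : ℂ), lam * (ℓ : ℂ), 0, 0;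
     0, (v : ℂ), lam * (c : ℂ), 0;
     lam, 0, -(v : ℂ), lam * (ℓ : ℂ);
     0, lam, 0, -(v : ℂ)]

lemma hε3 : ε ^ 3 = 1 := by
  rw [ε, ← Complex.exp_nat_mul]
  rw [show (3:ℕ) * (2 * Real.pi * Complex.I / 3) = 2 * Real.pi * Complex.I by push_cast; ring]
  exact Complex.exp_two_pi_mul_I

lemma hε0 : ε ≠ 0 := Complex.exp_ne_zero _

lemma hε4 : ε ^ 4 = ε := by rw [show (4:ℕ) = 3+1 from rfl, pow_succ, hε3, one_mul]

lemma hε5 : ε ^ 5 = ε ^ 2 := by rw [show (5:ℕ) = 3+2 from rfl, pow_add, hε3, one_mul]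

lemma hε6 : ε ^ 6 = 1 := by rw [show (6:ℕ) = 3*2 from rfl, pow_mul, hε3, one_pow]

lemma Emat_inv : Emat⁻¹ = Matrix.diagonal ![1, ε, ε ^ 2, 1] := by
  apply inv_eq_right_inv
  ext i j
  fin_cases i <;> fin_cases j <;>
    simp [Emat, Matrix.mul_apply, Fin.sum_univ_four, Matrix.diagonal, Matrix.one_apply] <;>
    linear_combination hε3

lemma J1_conj (Y : Matrix (Fin 4) (Fin 4) ℂ) :
    J₁ * Y * J₁ = Matrix.of (fun i j => Y (![3,2,1,0] i) (![3,2,1,0] j)) := by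
  ext i j
  fin_cases i <;> fin_cases j <;>
    simp [J₁, Matrix.mul_apply, Fin.sum_univ_four, -Matrix.cons_mul, Matrix.vecHead,
      Matrix.vecTail, Function.comp]

/-- Order-six symmetry of the extended Wilczynski frame of a Demoulin surface
(`P = Q = 0`): `−J₁ (E U^λ E⁻¹)ᵗ J₁ = U^{−ελ}` and `−J₁ (E V^λ E⁻¹)ᵗ J₁ = V^{−ελ}`
for all `λ ≠ 0`, i.e. `κ F(λ) = F(−ελ)` with `κ = τ₁ ∘ σ`. -/
theorem order_six_symmetry (b c k ℓ u v : ℝ) :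
    ∀ lam : ℂ, lam ≠ 0 →
      -(J₁ * (Emat * Uloop b k u lam * Emat⁻¹)ᵀ * J₁) = Uloop b k u (-(ε * lam)) ∧
      -(J₁ * (Emat * Vloop c ℓ v lam * Emat⁻¹)ᵀ * J₁) = Vloop c ℓ v (-(ε * lam)) := by
  intro lam hlam
  have hεlam : ε * lam ≠ 0 := mul_ne_zero hε0 hlam
  constructor <;>
  · rw [Emat_inv, Emat, Matrix.transpose_mul, Matrix.transpose_mul, Matrix.diagonal_transpose,
      Matrix.diagonal_transpose, J1_conj]
    ext i j
    fin_cases i <;> fin_cases j <;>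
      simp [Uloop, Vloop, Matrix.diagonal_mul, Matrix.mul_diagonal, Matrix.vecHead,
        Matrix.vecTail, Matrix.transpose_apply, Function.comp] <;>
      (try field_simp [hε0]) <;> (try ring_nf) <;>
      (try simp only [hε3, hε4, hε5, hε6]) <;> (try ring_nf) <;> (try ring) <;> simp
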